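/- Let n ≥ 2, let A be a real n×n singular irreducible M-matrix, and let L_G and U_G be the FSAI factors associated with the complete patterns S_L = {(i,j) : i ≥ j} \ {(n,n−1)} and S_U = {(i,j) : i ≤ j} \ {(n−1,n)}. With d_i = (L_G A U_G)_{ii} and D^− = diag(d_1^{−1}, …, d_{n−1}^{−1}, 0) and Â = U_G D^− L_G, one has Â A Â = Â. -/

import Mathlib

open Matrix

/-- The spectral radius of a real matrix: the maximum modulus of its complex
eigenvalues (supremum of moduli of elements of the complex spectrum). -/
noncomputable def specRad {n : ℕ} (B : Matrix (Fin n) (Fin n) ℝ) : ℝ :=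
  sSup ((fun z : ℂ => ‖z‖) '' spectrum ℂ (B.map Complex.ofReal))

/-- A real square matrix is a Z-matrix if its off-diagonal entries are nonpositive. -/
def IsZMatrix {n : ℕ} (A : Matrix (Fin n) (Fin n) ℝ) : Prop :=
  ∀ i j, i ≠ j → A i j ≤ 0

/-- A Z-matrix `A` is a nonsingular M-matrix if `A = s • 1 - B` with `B`
entrywise nonnegative and `s > ρ(B)`. -/
def IsNonsingularMMatrix {n : ℕ} (A : Matrix (Fin n) (Fin n) ℝ) : Prop :=
  IsZMatrix A ∧ ∃ (s : ℝ) (B : Matrix (Fin n) (Fin n) ℝ),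
    (∀ i j, 0 ≤ B i j) ∧ specRad B < s ∧ A = s • (1 : Matrix (Fin n) (Fin n) ℝ) - B

/-- A Z-matrix `A` is a singular M-matrix if `A = ρ(B) • 1 - B` with `B`
entrywise nonnegative. -/
def IsSingularMMatrix {n : ℕ} (A : Matrix (Fin n) (Fin n) ℝ) : Prop :=
  IsZMatrix A ∧ ∃ B : Matrix (Fin n) (Fin n) ℝ,
    (∀ i j, 0 ≤ B i j) ∧ A = specRad B • (1 : Matrix (Fin n) (Fin n) ℝ) - B

/-- A matrix is irreducible if its directed graph (edge `i → j` iff `A i j ≠ 0`)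
is strongly connected. -/
def IsIrreducibleMatrix {n : ℕ} (A : Matrix (Fin n) (Fin n) ℝ) : Prop :=
  ∀ i j : Fin n, Relation.ReflTransGen (fun a b : Fin n => A a b ≠ 0) i j

/-- Lower triangular real matrix. -/
def IsLowerTri {n : ℕ} (L : Matrix (Fin n) (Fin n) ℝ) : Prop :=
  ∀ i j : Fin n, i < j → L i j = 0

/-- Upper triangular real matrix. -/
def IsUpperTri {n : ℕ} (U : Matrix (Fin n) (Fin n) ℝ) : Prop :=
  ∀ i j : Fin n, j < i → U i j = 0

/-- `L` is an FSAI lower triangular factor of `A` for the pattern `S`: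
`L` is lower triangular, vanishes off the pattern, and `(L * A) i j = δ i j`
on the pattern. -/
def IsFSAILowerFactor {n : ℕ} (A L : Matrix (Fin n) (Fin n) ℝ)
    (S : Set (Fin n × Fin n)) : Prop :=
  IsLowerTri L ∧ (∀ p : Fin n × Fin n, p ∉ S → L p.1 p.2 = 0) ∧
    ∀ p : Fin n × Fin n, p ∈ S → (L * A) p.1 p.2 = if p.1 = p.2 then 1 else 0

/-- `U` is an FSAI upper triangular factor of `A` for the pattern `S`:
`U` is upper triangular, vanishes off the pattern, and `(A * U) i j = δ i j`
on the pattern. -/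
def IsFSAIUpperFactor {n : ℕ} (A U : Matrix (Fin n) (Fin n) ℝ)
    (S : Set (Fin n × Fin n)) : Prop :=
  IsUpperTri U ∧ (∀ p : Fin n × Fin n, p ∉ S → U p.1 p.2 = 0) ∧
    ∀ p : Fin n × Fin n, p ∈ S → (A * U) p.1 p.2 = if p.1 = p.2 then 1 else 0

/-!
Inside its pattern, `L_G A` has no strictly lower entries in the rows other than the last, and
`A U_G` has no strictly upper entries in the columns other than the last; hence
`M = L_G A U_G` is diagonal outside its last row and column. `D⁻` discards exactly that row and
column and inverts the remaining diagonal, so `D⁻ M D⁻ = D⁻`, and then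
`Â A Â = U_G (D⁻ M D⁻) L_G = Â`.
-/

namespace Matrix

variable {ι R : Type*} [Fintype ι]

theorem mul_apply_eq_zero_of_forall [NonUnitalNonAssocSemiring R] {P Q : Matrix ι ι R} {i j : ι}
    (h : ∀ k, P i k = 0 ∨ Q k j = 0) : (P * Q) i j = 0 :=
  Finset.sum_eq_zero fun k _ => (h k).elim (fun hP => by simp [hP]) (fun hQ => by simp [hQ])

theorem mul_mul_apply_eq_zero_of_ne [LinearOrder ι] [NonUnitalSemiring R]
    {L A U : Matrix ι ι R} {i j : ι} (hij : i ≠ j)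
    (hL : ∀ k, i < k → L i k = 0) (hU : ∀ k, j < k → U k j = 0)
    (hLA : ∀ k, k < i → (L * A) i k = 0) (hAU : ∀ k, k < j → (A * U) k j = 0) :
    (L * A * U) i j = 0 := by
  rcases hij.lt_or_gt with hij | hji
  · rw [Matrix.mul_assoc]
    exact mul_apply_eq_zero_of_forall fun k =>
      (lt_or_ge i k).imp (hL k) fun hki => hAU k (hki.trans_lt hij)
  · exact mul_apply_eq_zero_of_forall fun k =>
      ((lt_or_ge j k).imp (hU k) fun hkj => hLA k (hkj.trans_lt hji)).symm

/-- The paper's `D⁻` is `diagInvExcept (L_G * A * U_G) e` with `e` the last index. -/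
def diagInvExcept [DecidableEq ι] [DivisionRing R] (M : Matrix ι ι R) (e : ι) : Matrix ι ι R :=
  diagonal fun i => if i = e then 0 else (M i i)⁻¹

theorem diagInvExcept_mul_mul_self [DecidableEq ι] [DivisionRing R] {M : Matrix ι ι R} {e : ι}
    (hM : ∀ i j, i ≠ j → i ≠ e → j ≠ e → M i j = 0) :
    diagInvExcept M e * M * diagInvExcept M e = diagInvExcept M e := by
  ext i j
  simp only [diagInvExcept, mul_diagonal, diagonal_mul]
  rcases eq_or_ne i j with rfl | hij
  · by_cases hi : i = e
    · simp [hi]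
    · simpa [hi] using mul_inv_mul_cancel (M i i)⁻¹
  · rw [diagonal_apply_ne _ hij]
    by_cases hi : i = e
    · simp [hi]
    by_cases hj : j = e
    · simp [hj]
    simp [hM i j hij hi hj]

end Matrix

section FSAI

variable {n : ℕ} {A L U : Matrix (Fin n) (Fin n) ℝ} {S : Set (Fin n × Fin n)} {i j : Fin n}

theorem IsFSAILowerFactor.mul_apply_eq_zero (hL : IsFSAILowerFactor A L S) (hS : (i, j) ∈ S)
    (hij : i ≠ j) : (L * A) i j = 0 := by
  simpa [hij] using hL.2.2 (i, j) hS

theorem IsFSAIUpperFactor.mul_apply_eq_zero (hU : IsFSAIUpperFactor A U S) (hS : (i, j) ∈ S)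
    (hij : i ≠ j) : (A * U) i j = 0 := by
  simpa [hij] using hU.2.2 (i, j) hS

end FSAI

theorem fsai_two_inverse (n : ℕ) (hn : 2 ≤ n)
    (A : Matrix (Fin n) (Fin n) ℝ)
    (L U : Matrix (Fin n) (Fin n) ℝ)
    (hL : IsFSAILowerFactor A L
      ({p : Fin n × Fin n | p.2 ≤ p.1} \
        {((⟨n - 1, by omega⟩ : Fin n), (⟨n - 2, by omega⟩ : Fin n))}))
    (hU : IsFSAIUpperFactor A U
      ({p : Fin n × Fin n | p.1 ≤ p.2} \
        {((⟨n - 2, by omega⟩ : Fin n), (⟨n - 1, by omega⟩ : Fin n))}))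
    (Dm : Matrix (Fin n) (Fin n) ℝ)
    (hDm : Dm = Matrix.diagonal (fun i : Fin n =>
      if i = (⟨n - 1, by omega⟩ : Fin n) then 0 else ((L * A * U) i i)⁻¹))
    (Ahat : Matrix (Fin n) (Fin n) ℝ)
    (hAhat : Ahat = U * Dm * L) :
    Ahat * A * Ahat = Ahat := by
  set e : Fin n := ⟨n - 1, by omega⟩
  have hoff : ∀ i j, i ≠ j → i ≠ e → j ≠ e → (L * A * U) i j = 0 := fun i j hij hi hj =>
    mul_mul_apply_eq_zero_of_ne hij (hL.1 i) (fun k hk => hU.1 k j hk)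
      (fun k hk => hL.mul_apply_eq_zero ⟨hk.le, fun h => hi (congrArg Prod.fst h)⟩ hk.ne')
      (fun k hk => hU.mul_apply_eq_zero ⟨hk.le, fun h => hj (congrArg Prod.snd h)⟩ hk.ne)
  have hDm' : Dm = diagInvExcept (L * A * U) e := hDm
  calc Ahat * A * Ahat = U * (Dm * (L * A * U) * Dm) * L := by
        simp only [hAhat, Matrix.mul_assoc]
    _ = Ahat := by rw [hDm', diagInvExcept_mul_mul_self hoff, hAhat, hDm']
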